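/- Let G be a simple graph and C a minimum-size vertex set separating a from b. Then every vertex c ∈ C lies on some a–b path in G whose only vertex in C is c. -/

import Mathlib

open SimpleGraph

/-- Delete a set of vertices: keep the vertex type, remove all edges incident to `C`. -/
def GraphDel {V : Type} (G : SimpleGraph V) (C : Set V) : SimpleGraph V where
  Adj u v := G.Adj u v ∧ u ∉ C ∧ v ∉ C
  symm := ⟨fun u v ⟨h, hu, hv⟩ => ⟨h.symm, hv, hu⟩⟩
  loopless := ⟨fun u ⟨h, _, _⟩ => G.loopless.irrefl u h⟩

/-- Add a super-sink `none` adjacent exactly to the vertices in `T`. -/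
def AddSink {V : Type} (G : SimpleGraph V) (T : Set V) : SimpleGraph (Option V) where
  Adj u v :=
    match u, v with
    | some a, some b => G.Adj a b
    | some a, none => a ∈ T
    | none, some b => b ∈ T
    | none, none => False
  symm := by
    constructor
    rintro (_|a) (_|b) h
    · exact h
    · exact h
    · exact h
    · exact h.symm
  loopless := by
    constructor
    rintro (_|a) h
    · exact h
    · exact G.loopless.irrefl a h

theorem stmt16 {V : Type} [Fintype V] [DecidableEq V] (G : SimpleGraph V) (a b : V)
    (C : Finset V) (ha : a ∉ C) (hb : b ∉ C)
    (hsep : ∀ p : G.Walk a b, p.IsPath → ∃ c ∈ C, c ∈ p.support)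
    (hmin : ∀ C' : Finset V, a ∉ C' → b ∉ C' →
      (∀ p : G.Walk a b, p.IsPath → ∃ c ∈ C', c ∈ p.support) → C.card ≤ C'.card) :
    ∀ c ∈ C, ∃ p : G.Walk a b, p.IsPath ∧ c ∈ p.support ∧
      ∀ d ∈ C, d ∈ p.support → d = c := by
  intro c hc
  have hlt : (C.erase c).card < C.card := Finset.card_erase_lt_of_mem hc
  have hnot : ¬ ∀ p : G.Walk a b, p.IsPath → ∃ d ∈ C.erase c, d ∈ p.support := by
    intro h'
    exact absurd (hmin (C.erase c)
      (fun h => ha (Finset.mem_of_mem_erase h))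
      (fun h => hb (Finset.mem_of_mem_erase h)) h') (not_le.mpr hlt)
  push_neg at hnot
  obtain ⟨p, hp, hnone⟩ := hnot
  obtain ⟨d, hd, hds⟩ := hsep p hp
  have hdc : d = c := by
    by_contra hne
    exact hnone d (Finset.mem_erase.mpr ⟨hne, hd⟩) hds
  subst hdc
  refine ⟨p, hp, hds, fun e he hes => ?_⟩
  by_contra hne
  exact hnone e (Finset.mem_erase.mpr ⟨hne, he⟩) hes
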